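/- arXiv:2211.00357 — 2 statements merged into one kernel-verified Lean document; each statement's English description precedes it below -/
import Mathlib

section
/- Consider the quadratic ODE ẏ(t) = A y(t) + H(y(t) ⊗ y(t)) where A = J - R with J skew-symmetric and R symmetric positive semidefinite, and each H_i skew-symmetric. Then for any solution y with initial condition y(0) = y₀ and any t ≥ 0, one has ‖y(t)‖₂ ≤ ‖y₀‖₂. -/
/-!
Along a solution, `d/dt ‖y‖² = 2 yᵀ ẏ`. Skew-symmetry kills the contributions of `J` and of every
`Hᵢ`, so `d/dt ‖y‖² = -2 yᵀ R y ≤ 0`, and `‖y‖²` is antitone on `[0, ∞)`.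
-/

open Matrix

section SkewSymmetric

variable {ι α : Type*} [Fintype ι] [CommRing α] [NoZeroDivisors α] [CharZero α]

theorem Matrix.dotProduct_mulVec_self_eq_zero_of_transpose_eq_neg {M : Matrix ι ι α}
    (hM : Mᵀ = -M) (x : ι → α) : x ⬝ᵥ M *ᵥ x = 0 := by
  have h : x ⬝ᵥ M *ᵥ x = -(x ⬝ᵥ M *ᵥ x) := by
    calc x ⬝ᵥ M *ᵥ x = Mᵀ *ᵥ x ⬝ᵥ x := by rw [dotProduct_mulVec, ← mulVec_transpose]
      _ = -(x ⬝ᵥ M *ᵥ x) := by rw [hM, neg_mulVec, neg_dotProduct, dotProduct_comm]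
  exact self_eq_neg.mp h

theorem Matrix.dotProduct_sum_smul_mulVec_eq_zero {H : ι → Matrix ι ι α}
    (hH : ∀ i, (H i)ᵀ = -H i) (x : ι → α) : x ⬝ᵥ ∑ i, x i • H i *ᵥ x = 0 := by
  simp only [dotProduct_sum, dotProduct_smul,
    dotProduct_mulVec_self_eq_zero_of_transpose_eq_neg (hH _), smul_zero, Finset.sum_const_zero]

end SkewSymmetric

theorem dotProduct_quadraticField_nonpos {ι : Type*} [Fintype ι] {J R : Matrix ι ι ℝ}
    {H : ι → Matrix ι ι ℝ} (hJ : Jᵀ = -J) (hRpsd : ∀ x : ι → ℝ, 0 ≤ x ⬝ᵥ R *ᵥ x)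
    (hH : ∀ i, (H i)ᵀ = -H i) (x : ι → ℝ) :
    x ⬝ᵥ ((J - R) *ᵥ x + ∑ i, x i • H i *ᵥ x) ≤ 0 := by
  rw [dotProduct_add, sub_mulVec, dotProduct_sub,
    dotProduct_mulVec_self_eq_zero_of_transpose_eq_neg hJ, dotProduct_sum_smul_mulVec_eq_zero hH]
  linarith [hRpsd x]

theorem HasDerivWithinAt.dotProduct_self {ι : Type*} [Fintype ι] {y : ℝ → ι → ℝ}
    {y' : ι → ℝ} {s : Set ℝ} {t : ℝ} (hy : HasDerivWithinAt y y' s t) :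
    HasDerivWithinAt (fun u ↦ y u ⬝ᵥ y u) (2 * (y t ⬝ᵥ y')) s t := by
  have hcoord (i : ι) : HasDerivWithinAt (fun u ↦ y u i * y u i)
      (y' i * y t i + y t i * y' i) s t :=
    (hasDerivWithinAt_pi.mp hy i).mul (hasDerivWithinAt_pi.mp hy i)
  refine (HasDerivWithinAt.fun_sum (u := Finset.univ) fun i _ ↦ hcoord i).congr_deriv ?_
  simp only [dotProduct, Finset.mul_sum]
  exact Finset.sum_congr rfl fun i _ ↦ by ring

theorem antitoneOn_dotProduct_self_of_hasDerivWithinAt {ι : Type*} [Fintype ι] {s : Set ℝ}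
    (hs : Convex ℝ s) {y y' : ℝ → ι → ℝ} (hy : ∀ t ∈ s, HasDerivWithinAt y (y' t) s t)
    (hy' : ∀ t ∈ s, y t ⬝ᵥ y' t ≤ 0) : AntitoneOn (fun t ↦ y t ⬝ᵥ y t) s := by
  have hsq (t : ℝ) (ht : t ∈ s) := (hy t ht).dotProduct_self
  refine antitoneOn_of_hasDerivWithinAt_nonpos (f' := fun t ↦ 2 * (y t ⬝ᵥ y' t)) hs
    (fun t ht ↦ (hsq t ht).continuousWithinAt) (fun t ht ↦ ?_)
    (fun t ht ↦ by linarith [hy' t (interior_subset ht)])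
  exact ((hsq t (interior_subset ht)).hasDerivAt
    (mem_interior_iff_mem_nhds.mp ht)).hasDerivWithinAt

theorem stmt2_general (n : ℕ) (J R : Matrix (Fin n) (Fin n) ℝ)
    (H : Fin n → Matrix (Fin n) (Fin n) ℝ)
    (hJ : Jᵀ = -J) (hRpsd : ∀ x : Fin n → ℝ, 0 ≤ x ⬝ᵥ R.mulVec x)
    (hH : ∀ i, (H i)ᵀ = -(H i))
    (y : ℝ → Fin n → ℝ)
    (hy : ∀ t ∈ Set.Ici (0 : ℝ), HasDerivWithinAt y
      ((J - R).mulVec (y t) + ∑ i, y t i • (H i).mulVec (y t)) (Set.Ici 0) t) :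
    ∀ t ≥ (0 : ℝ),
      Real.sqrt (∑ i, (y t i) ^ 2) ≤ Real.sqrt (∑ i, (y 0 i) ^ 2) := by
  intro t ht
  have hanti := antitoneOn_dotProduct_self_of_hasDerivWithinAt (convex_Ici 0) hy
    fun t _ ↦ dotProduct_quadraticField_nonpos hJ hRpsd hH (y t)
  have hsum (u : ℝ) : ∑ i, y u i ^ 2 = y u ⬝ᵥ y u := by simp only [dotProduct, sq]
  simp only [hsum]
  exact Real.sqrt_le_sqrt (hanti Set.self_mem_Ici ht ht)

/-- For solutions of `ẏ = (J - R) y + ∑ i, yᵢ Hᵢ y` with `J`, `Hᵢ` skew-symmetric and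
`R` symmetric positive semidefinite, the Euclidean norm is nonincreasing from the
initial condition: `‖y(t)‖₂ ≤ ‖y(0)‖₂` for all `t ≥ 0`. -/
theorem stmt2 (n : ℕ) (J R : Matrix (Fin n) (Fin n) ℝ)
    (H : Fin n → Matrix (Fin n) (Fin n) ℝ)
    (hJ : Jᵀ = -J) (hR : Rᵀ = R) (hRpsd : ∀ x : Fin n → ℝ, 0 ≤ x ⬝ᵥ R.mulVec x)
    (hH : ∀ i, (H i)ᵀ = -(H i))
    (y : ℝ → Fin n → ℝ)
    (hy : ∀ t ∈ Set.Ici (0 : ℝ), HasDerivWithinAt y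
      ((J - R).mulVec (y t) + ∑ i, y t i • (H i).mulVec (y t)) (Set.Ici 0) t) :
    ∀ t ≥ (0 : ℝ),
      Real.sqrt (∑ i, (y t i) ^ 2) ≤ Real.sqrt (∑ i, (y 0 i) ^ 2) :=
  stmt2_general n J R H hJ hRpsd hH y hy
end

section
/- Consider the quadratic ODE ẏ(t) = (J - R) y(t) + H(y(t) ⊗ y(t)) with J skew-symmetric, R symmetric positive definite, and each H_i skew-symmetric. Then every solution converges to the origin: lim_{t→∞} y(t) = 0. -/
/-!
The squared Euclidean norm `V = ‖y‖²` is a strict Lyapunov function. Skew-symmetric matrices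
have vanishing quadratic forms, so neither `J` nor the quadratic terms `yᵢ Hᵢ y` contribute to
`V' = 2 ⟪y, ẏ⟫`, which leaves `V' = -2 yᵀ R y`. Positive definiteness and compactness of the unit
sphere give `yᵀ R y ≥ c ‖y‖²` with `c > 0`, so `V' ≤ -2 c V`, and Grönwall's inequality yields
`‖y t‖ ≤ ‖y 0‖ e^{-c t}`.
-/

open Matrix Filter Set Topology Real

namespace Matrix

variable {n α : Type*} [Fintype n]

theorem dotProduct_mulVec_self_eq_zero_of_transpose_eq_neg_s6 [CommRing α] [IsAddTorsionFree α]
    {A : Matrix n n α} (hA : Aᵀ = -A) (x : n → α) : x ⬝ᵥ A *ᵥ x = 0 :=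
  self_eq_neg.mp <| calc
    x ⬝ᵥ A *ᵥ x = Aᵀ *ᵥ x ⬝ᵥ x := by rw [dotProduct_mulVec, mulVec_transpose]
    _ = -(x ⬝ᵥ A *ᵥ x) := by rw [hA, neg_mulVec, neg_dotProduct, dotProduct_comm]

theorem dotProduct_sub_mulVec_add_sum_smul_mulVec [CommRing α] [IsAddTorsionFree α]
    {J R : Matrix n n α} {H : n → Matrix n n α} (hJ : Jᵀ = -J) (hH : ∀ i, (H i)ᵀ = -H i)
    (x : n → α) : x ⬝ᵥ ((J - R) *ᵥ x + ∑ i, x i • H i *ᵥ x) = -(x ⬝ᵥ R *ᵥ x) := by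
  simp [dotProduct_add, sub_mulVec, dotProduct_sub, dotProduct_sum, dotProduct_smul,
    dotProduct_mulVec_self_eq_zero_of_transpose_eq_neg_s6 hJ,
    dotProduct_mulVec_self_eq_zero_of_transpose_eq_neg_s6 (hH _)]

end Matrix

theorem exists_pos_mul_norm_sq_le {E : Type*} [NormedAddCommGroup E] [NormedSpace ℝ E]
    [FiniteDimensional ℝ E] {q : E → ℝ} (hq : Continuous q)
    (hsmul : ∀ (t : ℝ) (x : E), q (t • x) = t ^ 2 * q x) (hpos : ∀ x, x ≠ 0 → 0 < q x) :
    ∃ c > 0, ∀ x, c * ‖x‖ ^ 2 ≤ q x := by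
  have hq0 : q 0 = 0 := by simpa using hsmul 0 0
  rcases subsingleton_or_nontrivial E with hE | hE
  · exact ⟨1, one_pos, fun x => by simp [Subsingleton.elim x 0, hq0]⟩
  obtain ⟨u, hu, hmin⟩ := (isCompact_sphere (0 : E) 1).exists_isMinOn
    (NormedSpace.sphere_nonempty.2 zero_le_one) hq.continuousOn
  refine ⟨q u, hpos u (ne_zero_of_mem_unit_sphere ⟨u, hu⟩), fun x => ?_⟩
  rcases eq_or_ne x 0 with rfl | hx
  · simp [hq0]
  have hxu : ‖x‖⁻¹ • x ∈ Metric.sphere (0 : E) 1 := by simp [norm_smul, hx]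
  have hle : q u ≤ ‖x‖⁻¹ ^ 2 * q x := hsmul _ x ▸ hmin hxu
  have hnx : 0 < ‖x‖ := norm_pos_iff.2 hx
  calc q u * ‖x‖ ^ 2 ≤ ‖x‖⁻¹ ^ 2 * q x * ‖x‖ ^ 2 := by gcongr
    _ = q x := by field_simp

section Lyapunov

variable {F : Type*} [NormedAddCommGroup F] [InnerProductSpace ℝ F] {z z' : ℝ → F} {a c : ℝ}

theorem norm_le_mul_exp_of_inner_deriv_le
    (hz : ∀ t ∈ Ici a, HasDerivWithinAt z (z' t) (Ici a) t)
    (hdiss : ∀ t ∈ Ici a, inner ℝ (z t) (z' t) ≤ -c * ‖z t‖ ^ 2) {t : ℝ} (ht : a ≤ t) :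
    ‖z t‖ ≤ ‖z a‖ * exp (-(c * (t - a))) := by
  have hV : ∀ s ∈ Ici a, HasDerivWithinAt (‖z ·‖ ^ 2) (2 * inner ℝ (z s) (z' s)) (Ici a) s :=
    fun s hs => (hz s hs).norm_sq
  have hsq := le_gronwallBound_of_liminf_deriv_right_le (b := t) (δ := ‖z a‖ ^ 2)
    (K := -2 * c) (ε := 0)
    (fun s hs => (hV s hs.1).continuousWithinAt.mono Icc_subset_Ici_self)
    (fun s hs r hr => by
      simpa only [slope, vsub_eq_sub, smul_eq_mul] using
        ((hV s hs.1).mono (Ici_subset_Ici.2 hs.1)).liminf_right_slope_le hr)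
    le_rfl (fun s hs => by linarith [hdiss s hs.1]) t ⟨ht, le_rfl⟩
  rw [gronwallBound_ε0] at hsq
  refine (pow_le_pow_iff_left₀ (norm_nonneg _) (by positivity) two_ne_zero).1 ?_
  calc ‖z t‖ ^ 2 ≤ ‖z a‖ ^ 2 * exp (-2 * c * (t - a)) := by simpa using hsq
    _ = (‖z a‖ * exp (-(c * (t - a)))) ^ 2 := by rw [mul_pow, ← exp_nat_mul]; ring_nf

theorem tendsto_zero_of_inner_deriv_le (hc : 0 < c)
    (hz : ∀ t ∈ Ici a, HasDerivWithinAt z (z' t) (Ici a) t)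
    (hdiss : ∀ t ∈ Ici a, inner ℝ (z t) (z' t) ≤ -c * ‖z t‖ ^ 2) :
    Tendsto z atTop (𝓝 0) := by
  have hexp : Tendsto (fun t => ‖z a‖ * exp (-(c * (t - a)))) atTop (𝓝 0) := by
    simpa [sub_eq_add_neg] using (tendsto_exp_neg_atTop_nhds_zero.comp
      ((tendsto_id.atTop_add (tendsto_const_nhds (x := -a))).const_mul_atTop hc)).const_mul ‖z a‖
  refine squeeze_zero_norm' ?_ hexp
  filter_upwards [eventually_ge_atTop a] with t ht
  exact norm_le_mul_exp_of_inner_deriv_le hz hdiss ht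

end Lyapunov

theorem stmt6_general (n : ℕ) (J R : Matrix (Fin n) (Fin n) ℝ)
    (H : Fin n → Matrix (Fin n) (Fin n) ℝ)
    (hJ : Jᵀ = -J)
    (hRpd : ∀ x : Fin n → ℝ, x ≠ 0 → 0 < x ⬝ᵥ R.mulVec x)
    (hH : ∀ i, (H i)ᵀ = -(H i))
    (y : ℝ → Fin n → ℝ)
    (hy : ∀ t ∈ Set.Ici (0 : ℝ), HasDerivWithinAt y
      ((J - R).mulVec (y t) + ∑ i, y t i • (H i).mulVec (y t)) (Set.Ici 0) t) :
    Filter.Tendsto y Filter.atTop (nhds 0) := by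
  -- `Fin n → ℝ` carries the sup norm; the energy estimate lives in `EuclideanSpace`.
  let e := (EuclideanSpace.equiv (Fin n) ℝ).symm
  obtain ⟨c, hc, hcR⟩ := exists_pos_mul_norm_sq_le
    (q := fun u : EuclideanSpace ℝ (Fin n) => u.ofLp ⬝ᵥ R *ᵥ u.ofLp) (by fun_prop)
    (fun t u => by simp only [WithLp.ofLp_smul, mulVec_smul, dotProduct_smul, smul_dotProduct,
      smul_eq_mul]; ring) (fun u hu => hRpd _ (by simpa using hu))
  have hz := fun t ht => e.hasFDerivAt.comp_hasDerivWithinAt t (hy t ht)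
  have hdiss : ∀ t ∈ Ici (0 : ℝ), inner ℝ (WithLp.toLp 2 (y t))
      (WithLp.toLp 2 ((J - R) *ᵥ y t + ∑ i, y t i • H i *ᵥ y t)) ≤
      -c * ‖WithLp.toLp 2 (y t)‖ ^ 2 := by
    intro t _
    rw [EuclideanSpace.inner_toLp_toLp, star_trivial, dotProduct_comm,
      dotProduct_sub_mulVec_add_sum_smul_mulVec hJ hH]
    linarith [hcR (WithLp.toLp 2 (y t))]
  simpa [Function.comp_def] using
    (e.symm.continuous.tendsto 0).comp (tendsto_zero_of_inner_deriv_le hc hz hdiss)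

/-- Global asymptotic stability: with `J`, `Hᵢ` skew-symmetric and `R` symmetric
positive definite, every solution of `ẏ = (J - R) y + ∑ i, yᵢ Hᵢ y` converges to
the origin as `t → ∞`. -/
theorem stmt6 (n : ℕ) (J R : Matrix (Fin n) (Fin n) ℝ)
    (H : Fin n → Matrix (Fin n) (Fin n) ℝ)
    (hJ : Jᵀ = -J) (hR : Rᵀ = R)
    (hRpd : ∀ x : Fin n → ℝ, x ≠ 0 → 0 < x ⬝ᵥ R.mulVec x)
    (hH : ∀ i, (H i)ᵀ = -(H i))
    (y : ℝ → Fin n → ℝ)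
    (hy : ∀ t ∈ Set.Ici (0 : ℝ), HasDerivWithinAt y
      ((J - R).mulVec (y t) + ∑ i, y t i • (H i).mulVec (y t)) (Set.Ici 0) t) :
    Filter.Tendsto y Filter.atTop (nhds 0) :=
  stmt6_general n J R H hJ hRpd hH y hy
end
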